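/- arXiv:2008.04566 — 2 statements merged into one kernel-verified Lean document; each statement's English description precedes it below -/
import Mathlib

section
/- Let α ∈ ℝ^{e×d} (e ≥ d ≥ 1) be a non-degenerate coefficient matrix and O the associated optimization map. For any two constraint matrices m and m', the intersection P^α_m ∩ P^α_{m'} is nonempty if and only if P^α_{O(m∩m')} is nonempty; moreover, when nonempty, P^α_m ∩ P^α_{m'} = P^α_{O(m∩m')}. -/
/-!
For `x ∈ P_m` and `λ ∈ Λ_i`, the relation `λᵀα = α_i` gives `(αx)_i = ∑ λ_k (αx)_k`, and each
term `λ_k (αx)_k` lies between `λ_k e̲_k(λ_k, m)` and `λ_k ē_k(λ_k, m)`, strictly as soon as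
`λ_k ≠ 0`; since `λ ≠ 0`, `x` satisfies the constraints of `O(m)`. Conversely the unit vector
`δ_i` lies in `Λ_i` (rows of `α` are nonzero), so `O(m)` is at least as tight as `m`. Hence
`P_{O(m)} = P_m` for every `m`, and the theorem follows from `P_m ∩ P_{m'} = P_{m ∩ m'}`.
-/

open Set

/-- A constraint matrix: a pair of vectors of lower and upper bounds in `ℝ^e`. -/
abbrev CM (e : ℕ) := (Fin e → ℝ) × (Fin e → ℝ)

/-- The open polytope `P^α_m` associated with a coefficient matrix `α` and a
constraint matrix `m`. -/
def PolySet {e d : ℕ} (α : Matrix (Fin e) (Fin d) ℝ) (m : CM e) : Set (Fin d → ℝ) :=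
  {x | ∀ i, m.1 i < α.mulVec x i ∧ α.mulVec x i < m.2 i}

/-- A coefficient matrix is non-degenerate if its rows are nonzero and
pairwise non-proportional. -/
def Nondeg {e d : ℕ} (α : Matrix (Fin e) (Fin d) ℝ) : Prop :=
  (∀ i, α i ≠ 0) ∧ ∀ i j : Fin e, i ≠ j → ∀ c : ℝ, α i ≠ c • α j

/-- The set `Λ_i`: vectors `λ ∈ ℝ^e` supported on some `S` with `|S| ≤ d` which are
the unique solution of `λᵀ α = α_i` with support in `S`. -/
def Lambda {e d : ℕ} (α : Matrix (Fin e) (Fin d) ℝ) (i : Fin e) : Set (Fin e → ℝ) :=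
  {l | ∃ S : Finset (Fin e), S.card ≤ d ∧ (∀ k ∉ S, l k = 0) ∧
        (∀ j, ∑ k, l k * α k j = α i j) ∧
        ∀ l' : Fin e → ℝ, (∀ k ∉ S, l' k = 0) → (∀ j, ∑ k, l' k * α k j = α i j) → l' = l}

/-- `e̲_k(a,m)` -/
noncomputable def eLow {e : ℕ} (a : ℝ) (m : CM e) (k : Fin e) : ℝ :=
  if 0 ≤ a then m.1 k else m.2 k

/-- `ē_k(a,m)` -/
noncomputable def eHigh {e : ℕ} (a : ℝ) (m : CM e) (k : Fin e) : ℝ :=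
  if 0 ≤ a then m.2 k else m.1 k

/-- The optimized constraint matrix `O(m)`. -/
noncomputable def Opt {e d : ℕ} (α : Matrix (Fin e) (Fin d) ℝ) (m : CM e) : CM e :=
  (fun i => sSup ((fun l : Fin e → ℝ => ∑ k, l k * eLow (l k) m k) '' Lambda α i),
   fun i => sInf ((fun l : Fin e → ℝ => ∑ k, l k * eHigh (l k) m k) '' Lambda α i))

/-- Intersection constraint matrix `m ∩ m'`. -/
def interCM {e : ℕ} (m m' : CM e) : CM e :=
  (fun i => max (m.1 i) (m'.1 i), fun i => min (m.2 i) (m'.2 i))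

/-- Constraint-matrix inclusion `m ⊂ m'`. -/
def cmSub {e : ℕ} (m m' : CM e) : Prop := ∀ i, m'.1 i ≤ m.1 i ∧ m.2 i ≤ m'.2 i

open Matrix

section Lambda

lemma finite_Lambda {e d : ℕ} (α : Matrix (Fin e) (Fin d) ℝ) (i : Fin e) : (Lambda α i).Finite := by
  have hsub : Lambda α i ⊆ ⋃ S : Finset (Fin e),
      {l | (∀ k ∉ S, l k = 0) ∧ (∀ j, ∑ k, l k * α k j = α i j) ∧
        ∀ l' : Fin e → ℝ, (∀ k ∉ S, l' k = 0) → (∀ j, ∑ k, l' k * α k j = α i j) → l' = l} := by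
    rintro l ⟨S, -, hS⟩
    exact mem_iUnion.2 ⟨S, hS⟩
  refine (finite_iUnion fun S => Subsingleton.finite ?_).subset hsub
  rintro l₁ ⟨-, -, huniq⟩ l₂ ⟨hsupp₂, hsol₂, -⟩
  exact (huniq l₂ hsupp₂ hsol₂).symm

variable {e d : ℕ} {α : Matrix (Fin e) (Fin d) ℝ} {i : Fin e}

lemma vecMul_eq_of_mem_Lambda {l : Fin e → ℝ} (hl : l ∈ Lambda α i) : l ᵥ* α = α i := by
  obtain ⟨S, -, -, hsol, -⟩ := hl
  exact funext hsol

lemma ne_zero_of_mem_Lambda (hi : α i ≠ 0) {l : Fin e → ℝ} (hl : l ∈ Lambda α i) : l ≠ 0 := by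
  rintro rfl
  exact hi ((vecMul_eq_of_mem_Lambda hl).symm.trans (zero_vecMul α))

lemma single_mem_Lambda (hd : 1 ≤ d) (hi : α i ≠ 0) : Pi.single i 1 ∈ Lambda α i := by
  refine ⟨{i}, by simpa using hd, fun k hk => ?_, fun j => ?_, fun l hsupp hsol => ?_⟩
  · exact Pi.single_eq_of_ne (Finset.notMem_singleton.1 hk) 1
  · exact (congrFun (single_vecMul α i 1) j).trans (by simp)
  · have hl : l = Pi.single i (l i) := by
      funext k
      by_cases hk : k = i
      · subst hk; simp
      · rw [hsupp k (by simpa using hk), Pi.single_eq_of_ne hk]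
    have hsmul : l i • α i = α i := by
      have hvec : l ᵥ* α = α i := funext hsol
      rwa [hl, single_vecMul] at hvec
    have hli : l i = 1 := by
      have hzero : (l i - 1) • α i = 0 := by rw [sub_smul, one_smul, hsmul, sub_self]
      exact sub_eq_zero.1 ((smul_eq_zero.1 hzero).resolve_right hi)
    rw [hl, hli]

end Lambda

section Bounds

variable {e : ℕ} {m : CM e}

lemma mul_eLow_lt {a y : ℝ} {k : Fin e} (ha : a ≠ 0) (hlow : m.1 k < y) (hhigh : y < m.2 k) :
    a * eLow a m k < a * y := by
  unfold eLow
  split_ifs with h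
  · exact mul_lt_mul_of_pos_left hlow (h.lt_of_ne' ha)
  · exact mul_lt_mul_of_neg_left hhigh (not_le.1 h)

lemma mul_lt_mul_eHigh {a y : ℝ} {k : Fin e} (ha : a ≠ 0) (hlow : m.1 k < y) (hhigh : y < m.2 k) :
    a * y < a * eHigh a m k := by
  unfold eHigh
  split_ifs with h
  · exact mul_lt_mul_of_pos_left hhigh (h.lt_of_ne' ha)
  · exact mul_lt_mul_of_neg_left hlow (not_le.1 h)

variable {l y : Fin e → ℝ}

lemma sum_mul_eLow_lt_dotProduct (hl : l ≠ 0) (hy : ∀ k, m.1 k < y k ∧ y k < m.2 k) :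
    ∑ k, l k * eLow (l k) m k < l ⬝ᵥ y := by
  obtain ⟨k₀, hk₀⟩ := Function.ne_iff.1 hl
  refine Finset.sum_lt_sum (fun k _ => ?_)
    ⟨k₀, Finset.mem_univ _, mul_eLow_lt hk₀ (hy k₀).1 (hy k₀).2⟩
  by_cases hk : l k = 0
  · simp [hk]
  · exact (mul_eLow_lt hk (hy k).1 (hy k).2).le

lemma dotProduct_lt_sum_mul_eHigh (hl : l ≠ 0) (hy : ∀ k, m.1 k < y k ∧ y k < m.2 k) :
    l ⬝ᵥ y < ∑ k, l k * eHigh (l k) m k := by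
  obtain ⟨k₀, hk₀⟩ := Function.ne_iff.1 hl
  refine Finset.sum_lt_sum (fun k _ => ?_)
    ⟨k₀, Finset.mem_univ _, mul_lt_mul_eHigh hk₀ (hy k₀).1 (hy k₀).2⟩
  by_cases hk : l k = 0
  · simp [hk]
  · exact (mul_lt_mul_eHigh hk (hy k).1 (hy k).2).le

end Bounds

section Opt

variable {e d : ℕ} {α : Matrix (Fin e) (Fin d) ℝ} {m : CM e} {i : Fin e}

lemma dotProduct_mulVec_of_mem_Lambda {l : Fin e → ℝ} (hl : l ∈ Lambda α i) (x : Fin d → ℝ) :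
    l ⬝ᵥ (α *ᵥ x) = (α *ᵥ x) i := by
  rw [dotProduct_mulVec, vecMul_eq_of_mem_Lambda hl]
  rfl

lemma fst_le_Opt_fst (hd : 1 ≤ d) (hi : α i ≠ 0) : m.1 i ≤ (Opt α m).1 i := by
  refine le_csSup ((finite_Lambda α i).image _).bddAbove ⟨_, single_mem_Lambda hd hi, ?_⟩
  change ∑ k, _ = _
  rw [Fintype.sum_eq_single i fun k hk => by simp [hk]]
  simp [eLow]

lemma Opt_snd_le_snd (hd : 1 ≤ d) (hi : α i ≠ 0) : (Opt α m).2 i ≤ m.2 i := by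
  refine csInf_le ((finite_Lambda α i).image _).bddBelow ⟨_, single_mem_Lambda hd hi, ?_⟩
  change ∑ k, _ = _
  rw [Fintype.sum_eq_single i fun k hk => by simp [hk]]
  simp [eHigh]

lemma Opt_fst_lt_of_mem_PolySet (hd : 1 ≤ d) (hi : α i ≠ 0) {x : Fin d → ℝ}
    (hx : x ∈ PolySet α m) : (Opt α m).1 i < (α *ᵥ x) i := by
  refine (((finite_Lambda α i).image _).csSup_lt_iff
    ⟨_, mem_image_of_mem _ (single_mem_Lambda hd hi)⟩).2 (forall_mem_image.2 fun l hl => ?_)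
  rw [← dotProduct_mulVec_of_mem_Lambda hl]
  exact sum_mul_eLow_lt_dotProduct (ne_zero_of_mem_Lambda hi hl) hx

lemma lt_Opt_snd_of_mem_PolySet (hd : 1 ≤ d) (hi : α i ≠ 0) {x : Fin d → ℝ}
    (hx : x ∈ PolySet α m) : (α *ᵥ x) i < (Opt α m).2 i := by
  refine (((finite_Lambda α i).image _).lt_csInf_iff
    ⟨_, mem_image_of_mem _ (single_mem_Lambda hd hi)⟩).2 (forall_mem_image.2 fun l hl => ?_)
  rw [← dotProduct_mulVec_of_mem_Lambda hl]
  exact dotProduct_lt_sum_mul_eHigh (ne_zero_of_mem_Lambda hi hl) hx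

lemma PolySet_Opt (hd : 1 ≤ d) (hα : ∀ i, α i ≠ 0) (m : CM e) :
    PolySet α (Opt α m) = PolySet α m := by
  ext x
  constructor
  · intro hx i
    exact ⟨(fst_le_Opt_fst hd (hα i)).trans_lt (hx i).1,
      (hx i).2.trans_le (Opt_snd_le_snd hd (hα i))⟩
  · intro hx i
    exact ⟨Opt_fst_lt_of_mem_PolySet hd (hα i) hx, lt_Opt_snd_of_mem_PolySet hd (hα i) hx⟩

end Opt

lemma PolySet_inter {e d : ℕ} (α : Matrix (Fin e) (Fin d) ℝ) (m m' : CM e) :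
    PolySet α m ∩ PolySet α m' = PolySet α (interCM m m') := by
  ext x
  simp only [PolySet, interCM, mem_inter_iff, mem_ofPred_eq, max_lt_iff, lt_min_iff]
  exact ⟨fun ⟨h, h'⟩ i => ⟨⟨(h i).1, (h' i).1⟩, (h i).2, (h' i).2⟩,
    fun h => ⟨fun i => ⟨(h i).1.1, (h i).2.1⟩, fun i => ⟨(h i).1.2, (h i).2.2⟩⟩⟩

theorem statement_2_general {d e : ℕ} (hd : 1 ≤ d)
    (α : Matrix (Fin e) (Fin d) ℝ) (hα : Nondeg α) (m m' : CM e) :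
    ((PolySet α m ∩ PolySet α m').Nonempty ↔ (PolySet α (Opt α (interCM m m'))).Nonempty) ∧
    ((PolySet α m ∩ PolySet α m').Nonempty →
      PolySet α m ∩ PolySet α m' = PolySet α (Opt α (interCM m m'))) := by
  have key : PolySet α m ∩ PolySet α m' = PolySet α (Opt α (interCM m m')) := by
    rw [PolySet_inter, PolySet_Opt hd hα.1]
  exact ⟨by rw [key], fun _ => key⟩

/-- `P^α_m ∩ P^α_{m'}` is nonempty iff `P^α_{O(m ∩ m')}` is, and then
the two sets coincide. -/
theorem statement_2 {d e : ℕ} (hd : 1 ≤ d) (hde : d ≤ e)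
    (α : Matrix (Fin e) (Fin d) ℝ) (hα : Nondeg α) (m m' : CM e) :
    ((PolySet α m ∩ PolySet α m').Nonempty ↔ (PolySet α (Opt α (interCM m m'))).Nonempty) ∧
    ((PolySet α m ∩ PolySet α m').Nonempty →
      PolySet α m ∩ PolySet α m' = PolySet α (Opt α (interCM m m'))) :=
  statement_2_general hd α hα m m'
end

section
/- Let ϱ ∈ (0,1/2), ε ∈ (0,1/2), a ≥ 1, and let m be a constraint matrix for α_a with m = O(m) such that the polytope P^{α_a}_m is contained in (0,1)² and satisfies the localisation condition of Conditioning Problem 1, i.e., P^{α_a}_m ∩ A_ω ≠ ∅ iff ω ∈ {001, 011}. Then 0 ≤ m̲₁, m̄₁ ≤ 1/2, m̲₂ ≤ 1/2 ≤ m̄₂ ≤ 1, and 1/2 ≤ m̲₃ and 1/2 ≤ m̲₄. -/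
open Set

/-- The map `h`. -/
noncomputable def hfun (u : ℝ) : ℝ :=
  if Int.fract (u + 1/2) = 0 then (0:ℝ) else ((⌊u + 1/2⌋ : ℤ) : ℝ)

/-- The map `G_{ϱ,ε}` (symmetric three-cluster distribution `(ϱ, 1-2ϱ, ϱ)`). -/
noncomputable def Gmap (ϱ ε : ℝ) (x : Fin 2 → ℝ) : Fin 2 → ℝ := fun i =>
  2*(1-ε)*x i + 2*ε*((1-ϱ)*hfun (x i) + ϱ*(hfun (x 0 + x 1) - hfun (x (1-i)))) - hfun (x i)

/-- The open unit square `(0,1)²`. -/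
def cube2 : Set (Fin 2 → ℝ) := {x | ∀ i, 0 < x i ∧ x i < 1}

/-- The atom `A_ω` with label `ω = (h(x₁), h(x₂), h(x₁+x₂))`. -/
noncomputable def Atom2 (ω : ℤ × ℤ × ℤ) : Set (Fin 2 → ℝ) :=
  {x | x ∈ cube2 ∧ hfun (x 0) = (ω.1 : ℝ) ∧ hfun (x 1) = (ω.2.1 : ℝ) ∧
       hfun (x 0 + x 1) = (ω.2.2 : ℝ)}

/-- The symmetry `σ₃₂₁(x) = (1-x₂, 1-x₁)`. -/
def sigma321 (x : Fin 2 → ℝ) : Fin 2 → ℝ := fun i => 1 - x (1 - i)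

/-- The symmetry `Σ(x) = (1-x₁, 1-x₂)`. -/
def SigMap2 (x : Fin 2 → ℝ) : Fin 2 → ℝ := fun i => 1 - x i

/-- Conditioning Problem 1 for a set `P`. -/
noncomputable def SolvesCP1 (ϱ ε : ℝ) (P : Set (Fin 2 → ℝ)) : Prop :=
  P.Nonempty ∧ P ⊆ cube2 ∧
  (∀ ω : ℤ × ℤ × ℤ, (P ∩ Atom2 ω).Nonempty ↔ ω = (0,0,1) ∨ ω = (0,1,1)) ∧
  Gmap ϱ ε '' (P ∩ Atom2 (0,0,1)) = sigma321 '' P ∧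
  Gmap ϱ ε '' (P ∩ Atom2 (0,1,1)) ⊆ P

/-- The coefficient matrix `α_a` with rows `(1,0), (0,1), (a,1), (1,a)`. -/
noncomputable def alphaA (a : ℝ) : Matrix (Fin 4) (Fin 2) ℝ := !![1,0; 0,1; a,1; 1,a]

/-- `r_ϱ = (1-2ϱε)/(3-2ε)`. -/
noncomputable def rRho (ϱ ε : ℝ) : ℝ := (1 - 2*ϱ*ε)/(3 - 2*ε)

/-- The explicit constraint matrix `m_a`. -/
noncomputable def mMat (ϱ ε a : ℝ) : CM 4 :=
  (![ε*(1-2*ϱ), rRho ϱ ε, ((1+a)/a)*(rRho ϱ ε + (a-1)*ε*(1-2*ϱ)), (1+a)*rRho ϱ ε],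
   ![rRho ϱ ε, 1 - 2*ε*(1-ϱ-ε*(1-2*ϱ)), (1+a)*rRho ϱ ε,
     ((1+a)/a)*(a*rRho ϱ ε + 2*(a-1)*(1-ε)^2*(1-2*rRho ϱ ε))])

/-!
At a fixed point `m = O(m)` of the optimisation map no bound has slack: for `α_a` with `a ≥ 1`
every bound `m̲_i`, `m̄_i` is attained on the closed polytope `K = {m̲ ≤ α_a x ≤ m̄}`. To attain
`m̲_i` for the rows `x₁` and `a x₁ + x₂`, restrict the other constraints to the line
`(α_a x)_i = m̲_i`: they become intervals, and each pairwise compatibility condition between them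
is either one of the two-row bounds `m̲_i ≥ λ_j e̲_j + λ_k e̲_k` built into `O`, or follows from
`K ≠ ∅`. The remaining rows and the upper bounds follow from the symmetries
`(x₁, x₂) ↦ (x₂, x₁)` and `m ↦ -m`, under which `O` is equivariant.

Since `P^{α_a}_m` is open and convex, `K` lies in its closure, and the localisation condition
gives `0 ≤ x₁ ≤ 1/2`, `0 ≤ x₂ ≤ 1` and `x₁ + x₂ ≥ 1/2` there; evaluating these at the points
attaining the bounds gives the claim.
-/

open Matrix

section Polytopes

variable {e d : ℕ}

def closedPolySet (α : Matrix (Fin e) (Fin d) ℝ) (m : CM e) : Set (Fin d → ℝ) :=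
  {x | ∀ i, m.1 i ≤ (α *ᵥ x) i ∧ (α *ᵥ x) i ≤ m.2 i}

theorem polySet_subset_closedPolySet (α : Matrix (Fin e) (Fin d) ℝ) (m : CM e) :
    PolySet α m ⊆ closedPolySet α m :=
  fun _ hx i => ⟨(hx i).1.le, (hx i).2.le⟩

theorem openSegment_subset_polySet {α : Matrix (Fin e) (Fin d) ℝ} {m : CM e} {x y : Fin d → ℝ}
    (hx : x ∈ closedPolySet α m) (hy : y ∈ PolySet α m) : openSegment ℝ x y ⊆ PolySet α m := by
  rintro _ ⟨s, t, hs, ht, hst, rfl⟩ i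
  simp only [mulVec_add, mulVec_smul, Pi.add_apply, Pi.smul_apply, smul_eq_mul]
  obtain ⟨hxl, hxu⟩ := hx i
  obtain ⟨hyl, hyu⟩ := hy i
  have hsplit : ∀ r : ℝ, r = s * r + t * r := fun r => by rw [← add_mul, hst, one_mul]
  constructor
  · linarith [hsplit (m.1 i), mul_le_mul_of_nonneg_left hxl hs.le, mul_lt_mul_of_pos_left hyl ht]
  · linarith [hsplit (m.2 i), mul_le_mul_of_nonneg_left hxu hs.le, mul_lt_mul_of_pos_left hyu ht]

theorem closedPolySet_subset_closure {α : Matrix (Fin e) (Fin d) ℝ} {m : CM e}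
    (hP : (PolySet α m).Nonempty) : closedPolySet α m ⊆ closure (PolySet α m) := by
  obtain ⟨y, hy⟩ := hP
  intro x hx
  exact closure_mono (openSegment_subset_polySet hx hy)
    (segment_subset_closure_openSegment (left_mem_segment ℝ x y))

end Polytopes

section Optimization

variable {e d : ℕ}

theorem Lambda_finite (α : Matrix (Fin e) (Fin d) ℝ) (i : Fin e) : (Lambda α i).Finite := by
  have hsub : Lambda α i ⊆ ⋃ S : Finset (Fin e),
      {l | (∀ k ∉ S, l k = 0) ∧ (∀ j, ∑ k, l k * α k j = α i j) ∧
        ∀ l' : Fin e → ℝ, (∀ k ∉ S, l' k = 0) → (∀ j, ∑ k, l' k * α k j = α i j) → l' = l} := by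
    rintro l ⟨S, -, hS⟩
    exact Set.mem_iUnion.2 ⟨S, hS⟩
  refine (Set.finite_iUnion fun S => Set.Subsingleton.finite ?_).subset hsub
  rintro l ⟨hl, hsol, -⟩ l' ⟨-, -, huniq'⟩
  exact huniq' l hl hsol

theorem le_fst_of_mem_Lambda {α : Matrix (Fin e) (Fin d) ℝ} {m : CM e} (hopt : m = Opt α m)
    {i : Fin e} {l : Fin e → ℝ} (hl : l ∈ Lambda α i) :
    ∑ k, l k * eLow (l k) m k ≤ m.1 i :=
  calc ∑ k, l k * eLow (l k) m k ≤ (Opt α m).1 i :=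
        le_csSup (((Lambda_finite α i).image _).bddAbove) (Set.mem_image_of_mem _ hl)
    _ = m.1 i := by rw [← hopt]

theorem mem_Lambda_of_support_pair (α : Matrix (Fin e) (Fin 2) ℝ) {i j k : Fin e} (hjk : j ≠ k)
    {l : Fin e → ℝ} (hl : ∀ t, t ≠ j → t ≠ k → l t = 0)
    (hsol : ∀ c, l j * α j c + l k * α k c = α i c)
    (hdet : α j 0 * α k 1 - α j 1 * α k 0 ≠ 0) : l ∈ Lambda α i := by
  have hsum : ∀ l' : Fin e → ℝ, (∀ t ∉ ({j, k} : Finset (Fin e)), l' t = 0) →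
      ∀ c, ∑ t, l' t * α t c = l' j * α j c + l' k * α k c := fun l' hl' c =>
    Fintype.sum_eq_add j k hjk fun t ht => by simp [hl' t (by simp [ht.1, ht.2])]
  have hlS : ∀ t ∉ ({j, k} : Finset (Fin e)), l t = 0 := fun t ht => by
    simp only [Finset.mem_insert, Finset.mem_singleton, not_or] at ht
    exact hl t ht.1 ht.2
  refine ⟨{j, k}, Finset.card_le_two, hlS, fun c => (hsum l hlS c).trans (hsol c), ?_⟩
  intro l' hl' hsol'
  have e0 := (hsum l' hl' 0).symm.trans (hsol' 0)
  have e1 := (hsum l' hl' 1).symm.trans (hsol' 1)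
  have hj : (l' j - l j) * (α j 0 * α k 1 - α j 1 * α k 0) = 0 := by
    linear_combination α k 1 * e0 - α k 0 * e1 - α k 1 * hsol 0 + α k 0 * hsol 1
  have hk : (l' k - l k) * (α j 0 * α k 1 - α j 1 * α k 0) = 0 := by
    linear_combination -α j 1 * e0 + α j 0 * e1 + α j 1 * hsol 0 - α j 0 * hsol 1
  funext t
  by_cases htj : t = j
  · subst htj; linarith [(mul_eq_zero.1 hj).resolve_right hdet]
  by_cases htk : t = k
  · subst htk; linarith [(mul_eq_zero.1 hk).resolve_right hdet]
  rw [hl' t (by simp [htj, htk]), hl t htj htk]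

theorem mul_eLow_of_nonneg (m : CM e) (k : Fin e) {c : ℝ} (hc : 0 ≤ c) :
    c * eLow c m k = c * m.1 k := by
  rw [eLow, if_pos hc]

theorem mul_eLow_of_nonpos (m : CM e) (k : Fin e) {c : ℝ} (hc : c ≤ 0) :
    c * eLow c m k = c * m.2 k := by
  rcases hc.lt_or_eq with hc | rfl
  · rw [eLow, if_neg hc.not_ge]
  · simp

theorem eLow_div (m : CM e) (k : Fin e) (x : ℝ) {c : ℝ} (hc : 0 < c) :
    eLow (x / c) m k = eLow x m k := by
  simp only [eLow, le_div_iff₀ hc, zero_mul]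

theorem le_mul_fst_of_pair {α : Matrix (Fin e) (Fin 2) ℝ} {m : CM e} (hopt : m = Opt α m)
    {i j k : Fin e} (hjk : j ≠ k) {c cj ck : ℝ} (hc : 0 < c)
    (hrow : ∀ t, cj * α j t + ck * α k t = c * α i t)
    (hdet : α j 0 * α k 1 - α j 1 * α k 0 ≠ 0) :
    cj * eLow cj m j + ck * eLow ck m k ≤ c * m.1 i := by
  set l : Fin e → ℝ := fun t => if t = j then cj / c else if t = k then ck / c else 0
  have hlj : l j = cj / c := if_pos rfl
  have hlk : l k = ck / c := by simp [l, hjk.symm]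
  have hl0 : ∀ t, t ≠ j → t ≠ k → l t = 0 := fun t htj htk => by simp [l, htj, htk]
  have hmem : l ∈ Lambda α i := mem_Lambda_of_support_pair α hjk hl0
    (fun t => by rw [hlj, hlk]; field_simp; linear_combination hrow t) hdet
  have hle := le_fst_of_mem_Lambda hopt hmem
  rw [Fintype.sum_eq_add j k hjk (fun t ht => by simp [hl0 t ht.1 ht.2]), hlj, hlk,
    eLow_div m j cj hc, eLow_div m k ck hc] at hle
  calc cj * eLow cj m j + ck * eLow ck m k
      = c * (cj / c * eLow cj m j + ck / c * eLow ck m k) := by field_simp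
    _ ≤ c * m.1 i := mul_le_mul_of_nonneg_left hle hc.le

end Optimization

section Symmetries

variable {e d : ℕ}

def negCM (m : CM e) : CM e := (-m.2, -m.1)

theorem eLow_negCM (c : ℝ) (m : CM e) (k : Fin e) : eLow c (negCM m) k = -eHigh c m k := by
  unfold eLow eHigh negCM
  split_ifs <;> rfl

theorem eHigh_negCM (c : ℝ) (m : CM e) (k : Fin e) : eHigh c (negCM m) k = -eLow c m k := by
  unfold eLow eHigh negCM
  split_ifs <;> rfl

theorem Opt_negCM (α : Matrix (Fin e) (Fin d) ℝ) (m : CM e) :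
    Opt α (negCM m) = negCM (Opt α m) := by
  ext i
  · show sSup _ = -sInf _
    rw [← Real.sSup_neg, ← Set.image_neg_eq_neg, Set.image_image]
    simp only [eLow_negCM, mul_neg, Finset.sum_neg_distrib]
  · show sInf _ = -sSup _
    rw [← Real.sInf_neg, ← Set.image_neg_eq_neg, Set.image_image]
    simp only [eHigh_negCM, mul_neg, Finset.sum_neg_distrib]

theorem neg_mem_closedPolySet_negCM {α : Matrix (Fin e) (Fin d) ℝ} {m : CM e} {x : Fin d → ℝ}
    (hx : x ∈ closedPolySet α m) : -x ∈ closedPolySet α (negCM m) := fun i => by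
  simp only [negCM, mulVec_neg, Pi.neg_apply, neg_le_neg_iff]
  exact (hx i).symm

def permCM (σ : Equiv.Perm (Fin e)) (m : CM e) : CM e := (m.1 ∘ σ, m.2 ∘ σ)

theorem comp_symm_mem_Lambda_submatrix {α : Matrix (Fin e) (Fin d) ℝ} {σ : Equiv.Perm (Fin e)}
    {τ : Equiv.Perm (Fin d)} {i : Fin e} {l : Fin e → ℝ} (hl : l ∈ Lambda (α.submatrix σ τ) i) :
    l ∘ σ.symm ∈ Lambda α (σ i) := by
  have hsol : ∀ l' : Fin e → ℝ, (∀ j, ∑ k, l' k * α.submatrix σ τ k j = α.submatrix σ τ i j) ↔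
      ∀ j, ∑ k, (l' ∘ σ.symm) k * α k j = α (σ i) j := by
    intro l'
    conv_rhs => rw [← τ.forall_congr_right]
    refine forall_congr' fun j => ?_
    conv_rhs => rw [← Equiv.sum_comp σ]
    simp
  obtain ⟨S, hcard, hS, hlsol, huniq⟩ := hl
  refine ⟨S.map σ.toEmbedding, (Finset.card_map _).trans_le hcard, fun k hk => hS _ ?_,
    (hsol l).1 hlsol, fun l' hl' hl'sol => ?_⟩
  · simpa [Finset.mem_map_equiv] using hk
  · have := huniq (l' ∘ σ) (fun k hk => hl' _ (by simpa using hk))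
      ((hsol _).2 (by simpa [Function.comp_def] using hl'sol))
    rw [← this]
    ext k
    simp

theorem Lambda_submatrix (α : Matrix (Fin e) (Fin d) ℝ) (σ : Equiv.Perm (Fin e))
    (τ : Equiv.Perm (Fin d)) (i : Fin e) :
    Lambda (α.submatrix σ τ) i = (· ∘ σ) '' Lambda α (σ i) := by
  ext l
  constructor
  · intro hl
    exact ⟨l ∘ σ.symm, comp_symm_mem_Lambda_submatrix hl, by ext; simp⟩
  · rintro ⟨l, hl, rfl⟩
    have hα : α = (α.submatrix σ τ).submatrix σ.symm τ.symm := by ext; simp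
    rw [hα] at hl
    simpa using comp_symm_mem_Lambda_submatrix hl

theorem Opt_submatrix (α : Matrix (Fin e) (Fin d) ℝ) (σ : Equiv.Perm (Fin e))
    (τ : Equiv.Perm (Fin d)) (m : CM e) :
    Opt (α.submatrix σ τ) (permCM σ m) = permCM σ (Opt α m) := by
  ext i
  · simp only [Opt, permCM, Function.comp_apply, Lambda_submatrix, Set.image_image]
    congr 2 with l
    exact Equiv.sum_comp σ fun k => l k * eLow (l k) m k
  · simp only [Opt, permCM, Function.comp_apply, Lambda_submatrix, Set.image_image]
    congr 2 with l
    exact Equiv.sum_comp σ fun k => l k * eHigh (l k) m k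

theorem comp_mem_closedPolySet_submatrix {α : Matrix (Fin e) (Fin d) ℝ} {σ : Equiv.Perm (Fin e)}
    {τ : Equiv.Perm (Fin d)} {m : CM e} {x : Fin d → ℝ} (hx : x ∈ closedPolySet α m) :
    x ∘ τ ∈ closedPolySet (α.submatrix σ τ) (permCM σ m) := fun i => by
  simpa [submatrix_mulVec_equiv, permCM, Function.comp_def] using hx (σ i)

end Symmetries

theorem exists_forall_le_mul_le {ι : Type*} [Finite ι] [Nonempty ι] {c l u : ι → ℝ}
    (hc : ∀ i, 0 < c i) (h : ∀ i j, c j * l i ≤ c i * u j) :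
    ∃ s, ∀ i, l i ≤ c i * s ∧ c i * s ≤ u i := by
  have hbdd : BddAbove (Set.range fun i => l i / c i) := (Set.finite_range _).bddAbove
  refine ⟨⨆ i, l i / c i, fun i => ⟨?_, ?_⟩⟩
  · rw [← div_le_iff₀' (hc i)]
    exact le_ciSup hbdd i
  · rw [← le_div_iff₀' (hc i)]
    exact ciSup_le fun j => (div_le_div_iff₀ (hc j) (hc i)).2 (by linarith [h j i])

section AlphaA

variable {a : ℝ} {m : CM 4}

theorem alphaA_mulVec (a : ℝ) (x : Fin 2 → ℝ) :
    alphaA a *ᵥ x = ![x 0, x 1, a * x 0 + x 1, x 0 + a * x 1] := by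
  ext i
  fin_cases i <;> simp [alphaA, mulVec, dotProduct, Fin.sum_univ_two]

theorem mem_closedPolySet_alphaA_iff {x : Fin 2 → ℝ} :
    x ∈ closedPolySet (alphaA a) m ↔
      (m.1 0 ≤ x 0 ∧ x 0 ≤ m.2 0) ∧ (m.1 1 ≤ x 1 ∧ x 1 ≤ m.2 1) ∧
      (m.1 2 ≤ a * x 0 + x 1 ∧ a * x 0 + x 1 ≤ m.2 2) ∧
      (m.1 3 ≤ x 0 + a * x 1 ∧ x 0 + a * x 1 ≤ m.2 3) := by
  simp [closedPolySet, alphaA_mulVec, Fin.forall_fin_succ]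

def alphaASwap : Equiv.Perm (Fin 4) := Equiv.swap 0 1 * Equiv.swap 2 3

theorem alphaA_submatrix_swap (a : ℝ) :
    (alphaA a).submatrix alphaASwap (Equiv.swap 0 1) = alphaA a := by
  ext i j
  fin_cases i <;> fin_cases j <;> rfl

theorem alphaA_dual_bounds_zero (ha : 1 ≤ a) (hopt : m = Opt (alphaA a) m) :
    m.1 2 - m.2 1 ≤ a * m.1 0 ∧ m.1 3 - a * m.2 1 ≤ m.1 0 ∧
      (1 < a → a * m.1 2 - m.2 3 ≤ (a ^ 2 - 1) * m.1 0) := by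
  have ha0 : 0 < a := by linarith
  have h1 := le_mul_fst_of_pair hopt (i := 0) (j := 2) (k := 1) (cj := 1) (ck := -1) (by decide)
    ha0 (fun t => by fin_cases t <;> simp [alphaA]) (by simp [alphaA]; positivity)
  have h2 := le_mul_fst_of_pair hopt (i := 0) (j := 3) (k := 1) (cj := 1) (ck := -a) (by decide)
    one_pos (fun t => by fin_cases t <;> simp [alphaA]) (by simp [alphaA])
  rw [mul_eLow_of_nonneg _ _ zero_le_one, mul_eLow_of_nonpos _ _ (by linarith)] at h1 h2
  refine ⟨by linarith, by linarith, fun ha1 => ?_⟩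
  have h3 := le_mul_fst_of_pair hopt (i := 0) (j := 2) (k := 3) (c := a ^ 2 - 1) (cj := a)
    (ck := -1) (by decide) (by nlinarith) (fun t => by fin_cases t <;> simp [alphaA]; ring)
    (by simp [alphaA]; nlinarith)
  rw [mul_eLow_of_nonneg _ _ ha0.le, mul_eLow_of_nonpos _ _ (by norm_num)] at h3
  linarith

theorem alphaA_dual_bounds_two (ha : 1 ≤ a) (hopt : m = Opt (alphaA a) m) :
    a * m.1 0 + m.1 1 ≤ m.1 2 ∧ (a ^ 2 - 1) * m.1 0 + m.1 3 ≤ a * m.1 2 ∧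
      a * m.1 3 - (a ^ 2 - 1) * m.2 1 ≤ m.1 2 := by
  have ha0 : 0 < a := by linarith
  have h1 := le_mul_fst_of_pair hopt (i := 2) (j := 0) (k := 1) (cj := a) (ck := 1) (by decide)
    one_pos (fun t => by fin_cases t <;> simp [alphaA]) (by simp [alphaA])
  have h2 := le_mul_fst_of_pair hopt (i := 2) (j := 0) (k := 3) (cj := a ^ 2 - 1) (ck := 1)
    (by decide) ha0 (fun t => by fin_cases t <;> simp [alphaA]; ring) (by simp [alphaA]; positivity)
  have h3 := le_mul_fst_of_pair hopt (i := 2) (j := 1) (k := 3) (cj := 1 - a ^ 2) (ck := a)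
    (by decide) one_pos (fun t => by fin_cases t <;> simp [alphaA]; ring) (by simp [alphaA])
  rw [mul_eLow_of_nonneg _ _ ha0.le, mul_eLow_of_nonneg _ _ zero_le_one] at h1
  rw [mul_eLow_of_nonneg _ _ (by nlinarith), mul_eLow_of_nonneg _ _ zero_le_one] at h2
  rw [mul_eLow_of_nonpos _ _ (by nlinarith), mul_eLow_of_nonneg _ _ ha0.le] at h3
  exact ⟨by linarith, by linarith, by linarith⟩

theorem exists_mem_closedPolySet_alphaA_apply_zero_eq (ha : 1 ≤ a) (hopt : m = Opt (alphaA a) m)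
    (hK : (closedPolySet (alphaA a) m).Nonempty) :
    ∃ v ∈ closedPolySet (alphaA a) m, v 0 = m.1 0 := by
  obtain ⟨x, hx⟩ := hK
  obtain ⟨⟨hx0, hx0'⟩, ⟨hx1, hx1'⟩, ⟨hx2, hx2'⟩, ⟨hx3, hx3'⟩⟩ := mem_closedPolySet_alphaA_iff.1 hx
  obtain ⟨hA1, hA2, hA3⟩ := alphaA_dual_bounds_zero ha hopt
  have hA3' : a * m.1 2 - m.2 3 ≤ (a ^ 2 - 1) * m.1 0 := by
    rcases ha.eq_or_lt with rfl | ha1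
    · linarith
    · exact hA3 ha1
  -- on the line `x 0 = m.1 0` the rows 1, 2, 3 constrain `x 1` to three intervals
  obtain ⟨y, hy⟩ := exists_forall_le_mul_le (c := ![1, 1, a])
    (l := ![m.1 1, m.1 2 - a * m.1 0, m.1 3 - m.1 0])
    (u := ![m.2 1, m.2 2 - a * m.1 0, m.2 3 - m.1 0])
    (fun i => by fin_cases i <;> simp; linarith)
    (fun i j => by
      fin_cases i <;> fin_cases j <;> simp <;>
        nlinarith [mul_le_mul_of_nonneg_left hx0 (by nlinarith : (0:ℝ) ≤ a ^ 2 - 1)])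
  have h1 := hy 0
  have h2 := hy 1
  have h3 := hy 2
  simp only [Matrix.cons_val, Matrix.cons_val_zero, Matrix.cons_val_one, one_mul] at h1 h2 h3
  refine ⟨![m.1 0, y], mem_closedPolySet_alphaA_iff.2 ?_, rfl⟩
  simp only [Matrix.cons_val_zero, Matrix.cons_val_one, Matrix.cons_val_fin_one]
  refine ⟨⟨le_rfl, ?_⟩, h1, ⟨?_, ?_⟩, ⟨?_, ?_⟩⟩ <;> linarith

theorem exists_mem_closedPolySet_alphaA_apply_two_eq (ha : 1 ≤ a) (hopt : m = Opt (alphaA a) m)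
    (hK : (closedPolySet (alphaA a) m).Nonempty) :
    ∃ v ∈ closedPolySet (alphaA a) m, a * v 0 + v 1 = m.1 2 := by
  obtain ⟨x, hx⟩ := hK
  obtain ⟨⟨hx0, hx0'⟩, ⟨hx1, hx1'⟩, ⟨hx2, hx2'⟩, ⟨hx3, hx3'⟩⟩ := mem_closedPolySet_alphaA_iff.1 hx
  obtain ⟨hE1, hE2, hE3⟩ := alphaA_dual_bounds_two ha hopt
  have ha0 : 0 < a := by linarith
  have ha2 : 0 ≤ a ^ 2 - 1 := by nlinarith
  -- on the line through `(s, m.1 2 - a * s)` the rows 0, 1, 3 constrain `s`; for `a = 1` row 3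
  -- is parallel to the line
  have hs : ∃ s, (m.1 0 ≤ s ∧ s ≤ m.2 0) ∧ (m.1 2 - m.2 1 ≤ a * s ∧ a * s ≤ m.1 2 - m.1 1) ∧
      (m.1 3 ≤ a * m.1 2 - (a ^ 2 - 1) * s ∧ a * m.1 2 - (a ^ 2 - 1) * s ≤ m.2 3) := by
    rcases ha.eq_or_lt with rfl | ha1
    · obtain ⟨s, hs⟩ := exists_forall_le_mul_le (c := ![1, 1]) (l := ![m.1 0, m.1 2 - m.2 1])
        (u := ![m.2 0, m.1 2 - m.1 1]) (fun i => by fin_cases i <;> simp)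
        (fun i j => by fin_cases i <;> fin_cases j <;> simp <;> linarith)
      have h1 := hs 0
      have h2 := hs 1
      simp only [Matrix.cons_val_zero, Matrix.cons_val_one, one_mul] at h1 h2
      exact ⟨s, h1, ⟨by linarith, by linarith⟩, by linarith, by linarith⟩
    · have ha2' : 0 < a ^ 2 - 1 := by nlinarith
      obtain ⟨s, hs⟩ := exists_forall_le_mul_le (c := ![1, a, a ^ 2 - 1])
        (l := ![m.1 0, m.1 2 - m.2 1, a * m.1 2 - m.2 3])
        (u := ![m.2 0, m.1 2 - m.1 1, a * m.1 2 - m.1 3])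
        (fun i => by fin_cases i; exacts [one_pos, ha0, ha2'])
        (fun i j => by
          fin_cases i <;> fin_cases j <;> simp <;>
            nlinarith [mul_le_mul_of_nonneg_left hx0' ha2, mul_le_mul_of_nonneg_left hx1 ha2])
      have h1 := hs 0
      have h2 := hs 1
      have h3 := hs 2
      simp only [Matrix.cons_val, Matrix.cons_val_zero, Matrix.cons_val_one, one_mul] at h1 h2 h3
      exact ⟨s, h1, h2, by linarith, by linarith⟩
  obtain ⟨s, h0, h1, h3⟩ := hs
  refine ⟨![s, m.1 2 - a * s], mem_closedPolySet_alphaA_iff.2 ?_, by simp⟩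
  simp only [Matrix.cons_val_zero, Matrix.cons_val_one, Matrix.cons_val_fin_one]
  refine ⟨h0, ⟨?_, ?_⟩, ⟨?_, ?_⟩, ⟨?_, ?_⟩⟩ <;> linarith

end AlphaA

section Attainment

variable {a : ℝ} {m : CM 4}

theorem permCM_alphaASwap_permCM_alphaASwap (m : CM 4) :
    permCM alphaASwap (permCM alphaASwap m) = m := by
  ext i <;> fin_cases i <;> rfl

theorem alphaA_mulVec_comp_swap (a : ℝ) (v : Fin 2 → ℝ) (i : Fin 4) :
    (alphaA a *ᵥ (v ∘ Equiv.swap 0 1)) (alphaASwap i) = (alphaA a *ᵥ v) i := by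
  conv_rhs => rw [← alphaA_submatrix_swap a, submatrix_mulVec_equiv]
  rfl

theorem exists_mem_closedPolySet_alphaA_mulVec_eq_fst (ha : 1 ≤ a) (hopt : m = Opt (alphaA a) m)
    (hK : (closedPolySet (alphaA a) m).Nonempty) (i : Fin 4) :
    ∃ v ∈ closedPolySet (alphaA a) m, (alphaA a *ᵥ v) i = m.1 i := by
  have hbase : ∀ m' : CM 4, m' = Opt (alphaA a) m' → (closedPolySet (alphaA a) m').Nonempty →
      ∀ i ∈ ({0, 2} : Finset (Fin 4)),
        ∃ v ∈ closedPolySet (alphaA a) m', (alphaA a *ᵥ v) i = m'.1 i := by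
    intro m' hopt' hK' i hi
    simp only [Finset.mem_insert, Finset.mem_singleton] at hi
    rcases hi with rfl | rfl
    · simpa [alphaA_mulVec] using exists_mem_closedPolySet_alphaA_apply_zero_eq ha hopt' hK'
    · simpa [alphaA_mulVec] using exists_mem_closedPolySet_alphaA_apply_two_eq ha hopt' hK'
  have hswapped : ∀ j ∈ ({0, 2} : Finset (Fin 4)), ∃ v ∈ closedPolySet (alphaA a) m,
      (alphaA a *ᵥ v) (alphaASwap j) = m.1 (alphaASwap j) := by
    intro j hj
    have hopt' : permCM alphaASwap m = Opt (alphaA a) (permCM alphaASwap m) := by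
      conv_rhs => rw [← alphaA_submatrix_swap a, Opt_submatrix, ← hopt]
    obtain ⟨x, hx⟩ := hK
    have hK' : (closedPolySet (alphaA a) (permCM alphaASwap m)).Nonempty :=
      ⟨x ∘ Equiv.swap 0 1, alphaA_submatrix_swap a ▸ comp_mem_closedPolySet_submatrix hx⟩
    obtain ⟨v, hv, hvj⟩ := hbase _ hopt' hK' j hj
    refine ⟨v ∘ Equiv.swap 0 1, ?_, (alphaA_mulVec_comp_swap a v j).trans hvj⟩
    simpa only [alphaA_submatrix_swap, permCM_alphaASwap_permCM_alphaASwap]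
      using comp_mem_closedPolySet_submatrix (σ := alphaASwap) (τ := Equiv.swap 0 1) hv
  fin_cases i
  · exact hbase m hopt hK 0 (by simp)
  · exact hswapped 0 (by simp)
  · exact hbase m hopt hK 2 (by simp)
  · exact hswapped 2 (by simp)

theorem exists_mem_closedPolySet_alphaA_mulVec_eq_snd (ha : 1 ≤ a) (hopt : m = Opt (alphaA a) m)
    (hK : (closedPolySet (alphaA a) m).Nonempty) (i : Fin 4) :
    ∃ v ∈ closedPolySet (alphaA a) m, (alphaA a *ᵥ v) i = m.2 i := by
  have hopt' : negCM m = Opt (alphaA a) (negCM m) := by rw [Opt_negCM, ← hopt]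
  obtain ⟨x, hx⟩ := hK
  obtain ⟨v, hv, hvi⟩ := exists_mem_closedPolySet_alphaA_mulVec_eq_fst ha hopt'
    ⟨-x, neg_mem_closedPolySet_negCM hx⟩ i
  refine ⟨-v, ?_, ?_⟩
  · simpa [negCM] using neg_mem_closedPolySet_negCM hv
  · simp only [mulVec_neg, Pi.neg_apply, hvi, negCM, neg_neg]

end Attainment

theorem exists_hfun_eq_intCast (u : ℝ) : ∃ n : ℤ, hfun u = n := by
  unfold hfun
  split_ifs
  exacts [⟨0, by simp⟩, ⟨_, rfl⟩]

theorem exists_mem_Atom2 {x : Fin 2 → ℝ} (hx : x ∈ cube2) : ∃ ω, x ∈ Atom2 ω := by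
  obtain ⟨n₁, h₁⟩ := exists_hfun_eq_intCast (x 0)
  obtain ⟨n₂, h₂⟩ := exists_hfun_eq_intCast (x 1)
  obtain ⟨n₃, h₃⟩ := exists_hfun_eq_intCast (x 0 + x 1)
  exact ⟨(n₁, n₂, n₃), hx, h₁, h₂, h₃⟩

theorem le_half_of_hfun_eq_zero {u : ℝ} (h : hfun u = 0) (hu : u < 3 / 2) : u ≤ 1 / 2 := by
  unfold hfun at h
  split_ifs at h with hfract
  · obtain ⟨n, hn⟩ := Int.fract_eq_zero_iff.1 hfract
    have : n < 2 := by exact_mod_cast (show (n : ℝ) < 2 by linarith)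
    have : (n : ℝ) ≤ 1 := by exact_mod_cast Int.lt_add_one_iff.1 this
    linarith
  · linarith [Int.lt_floor_add_one (u + 1 / 2)]

theorem half_lt_of_hfun_eq_one {u : ℝ} (h : hfun u = 1) : 1 / 2 < u := by
  unfold hfun at h
  split_ifs at h with hfract
  · norm_num at h
  · have h1 : ⌊u + 1 / 2⌋ = 1 := by exact_mod_cast h
    have hle : (1 : ℝ) ≤ u + 1 / 2 := by exact_mod_cast h1 ▸ Int.floor_le (u + 1 / 2)
    refine lt_of_le_of_ne (by linarith) fun hu => hfract ?_
    rw [← hu]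
    norm_num

theorem le_half_and_half_lt_add_of_localised {P : Set (Fin 2 → ℝ)} (hsub : P ⊆ cube2)
    (hloc : ∀ ω : ℤ × ℤ × ℤ, (P ∩ Atom2 ω).Nonempty ↔ ω = (0,0,1) ∨ ω = (0,1,1))
    {x : Fin 2 → ℝ} (hx : x ∈ P) : x 0 ≤ 1 / 2 ∧ 1 / 2 < x 0 + x 1 := by
  obtain ⟨ω, hω⟩ := exists_mem_Atom2 (hsub hx)
  have hx0 : x 0 < 1 := (hsub hx 0).2
  rcases (hloc ω).1 ⟨x, hx, hω⟩ with rfl | rfl <;>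
  · obtain ⟨-, h0, -, h2⟩ := hω
    norm_num at h0 h2
    exact ⟨le_half_of_hfun_eq_zero h0 (by linarith), half_lt_of_hfun_eq_one h2⟩

theorem closedPolySet_subset_of_localised {e : ℕ} {α : Matrix (Fin e) (Fin 2) ℝ} {m : CM e}
    (hsub : PolySet α m ⊆ cube2)
    (hloc : ∀ ω : ℤ × ℤ × ℤ, (PolySet α m ∩ Atom2 ω).Nonempty ↔ ω = (0,0,1) ∨ ω = (0,1,1)) :
    closedPolySet α m ⊆ {x | (0 ≤ x 0 ∧ x 0 ≤ 1 / 2) ∧ (0 ≤ x 1 ∧ x 1 ≤ 1) ∧ 1 / 2 ≤ x 0 + x 1} := by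
  obtain ⟨p, hp, -⟩ := (hloc (0,0,1)).2 (Or.inl rfl)
  refine (closedPolySet_subset_closure ⟨p, hp⟩).trans (closure_minimal ?_ ?_)
  · intro x hx
    have := le_half_and_half_lt_add_of_localised hsub hloc hx
    exact ⟨⟨(hsub hx 0).1.le, this.1⟩, ⟨(hsub hx 1).1.le, (hsub hx 1).2.le⟩, this.2.le⟩
  · simp only [Set.ofPred_and]
    apply_rules [IsClosed.inter, isClosed_le] <;> fun_prop

theorem statement_12_general (a : ℝ) (ha : 1 ≤ a)
    (m : CM 4) (hopt : m = Opt (alphaA a) m)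
    (hsub : PolySet (alphaA a) m ⊆ cube2)
    (hloc : ∀ ω : ℤ × ℤ × ℤ,
      (PolySet (alphaA a) m ∩ Atom2 ω).Nonempty ↔ ω = (0,0,1) ∨ ω = (0,1,1)) :
    0 ≤ m.1 0 ∧ m.2 0 ≤ 1/2 ∧ m.1 1 ≤ 1/2 ∧ (1/2 ≤ m.2 1 ∧ m.2 1 ≤ 1) ∧
    1/2 ≤ m.1 2 ∧ 1/2 ≤ m.1 3 := by
  obtain ⟨p, hpP, hpc, -, hp1, -⟩ := (hloc (0,0,1)).2 (Or.inl rfl)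
  obtain ⟨q, hqP, -, -, hq1, -⟩ := (hloc (0,1,1)).2 (Or.inr rfl)
  norm_num at hp1 hq1
  have hp : m.1 1 < p 1 := by simpa [alphaA_mulVec] using (hpP 1).1
  have hq : q 1 < m.2 1 := by simpa [alphaA_mulVec] using (hqP 1).2
  have hK : (closedPolySet (alphaA a) m).Nonempty := ⟨p, polySet_subset_closedPolySet _ _ hpP⟩
  have hKS := closedPolySet_subset_of_localised hsub hloc
  have hlow := exists_mem_closedPolySet_alphaA_mulVec_eq_fst ha hopt hK
  have hup := exists_mem_closedPolySet_alphaA_mulVec_eq_snd ha hopt hK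
  obtain ⟨v₀, hv₀, hv₀e⟩ := hlow 0
  obtain ⟨v₂, hv₂, hv₂e⟩ := hlow 2
  obtain ⟨v₃, hv₃, hv₃e⟩ := hlow 3
  obtain ⟨w₀, hw₀, hw₀e⟩ := hup 0
  obtain ⟨w₁, hw₁, hw₁e⟩ := hup 1
  simp only [alphaA_mulVec, Matrix.cons_val] at hv₀e hv₂e hv₃e hw₀e hw₁e
  refine ⟨?_, ?_, ?_, ⟨?_, ?_⟩, ?_, ?_⟩
  · linarith [(hKS hv₀).1.1]
  · linarith [(hKS hw₀).1.2]
  · linarith [le_half_of_hfun_eq_zero hp1 (by linarith [(hpc 1).2])]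
  · linarith [half_lt_of_hfun_eq_one hq1]
  · linarith [(hKS hw₁).2.1.2]
  · obtain ⟨⟨hv0, -⟩, -, hvsum⟩ := hKS hv₂
    nlinarith [mul_nonneg (sub_nonneg.2 ha) hv0]
  · obtain ⟨-, ⟨hv1, -⟩, hvsum⟩ := hKS hv₃
    nlinarith [mul_nonneg (sub_nonneg.2 ha) hv1]

/-- basic bounds on the entries of an optimized constraint matrix whose
polytope lies in `(0,1)²` and satisfies the localisation condition of
Conditioning Problem 1. -/
theorem statement_12 (ϱ ε a : ℝ) (hϱ : ϱ ∈ Set.Ioo (0:ℝ) (1/2))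
    (hε : ε ∈ Set.Ioo (0:ℝ) (1/2)) (ha : 1 ≤ a)
    (m : CM 4) (hopt : m = Opt (alphaA a) m)
    (hsub : PolySet (alphaA a) m ⊆ cube2)
    (hloc : ∀ ω : ℤ × ℤ × ℤ,
      (PolySet (alphaA a) m ∩ Atom2 ω).Nonempty ↔ ω = (0,0,1) ∨ ω = (0,1,1)) :
    0 ≤ m.1 0 ∧ m.2 0 ≤ 1/2 ∧ m.1 1 ≤ 1/2 ∧ (1/2 ≤ m.2 1 ∧ m.2 1 ≤ 1) ∧
    1/2 ≤ m.1 2 ∧ 1/2 ≤ m.1 3 :=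
  statement_12_general a ha m hopt hsub hloc
end
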